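/- arXiv:1912.01124 — 3 statements merged into one kernel-verified Lean document; each statement's English description precedes it below -/
import Mathlib

section
/- Let c(x) satisfy c = 1 + x·c^2. Then c(x/(1+x)^2) = 1 + x as formal power series (where the substitution x ↦ x/(1+x)^2 is valid since x/(1+x)^2 has zero constant term). -/
open PowerSeries Finset

/-!
Both `c(f)` and `1 + X`, with `f = X / (1 + X)^2`, solve the quadratic `u = 1 + f u^2`; the
first because substitution of `f` is a ring homomorphism, the second because `f (1 + X)^2 = X`.
Subtracting gives `(1 - f (u + v)) (u - v) = 0`, and the first factor is a unit.
-/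

/-- Composition `g ∘ f` of formal power series (valid when `f` has zero constant term). -/
noncomputable def psComp (g f : PowerSeries ℚ) : PowerSeries ℚ :=
  PowerSeries.mk fun n => ∑ k ∈ Finset.range (n + 1),
    PowerSeries.coeff k g * PowerSeries.coeff n (f ^ k)

namespace PowerSeries

variable {R : Type*} [CommRing R]

theorem eq_of_eq_one_add_mul_sq {f u v : R⟦X⟧} (hf : constantCoeff f = 0)
    (hu : u = 1 + f * u ^ 2) (hv : v = 1 + f * v ^ 2) : u = v := by
  have hunit : IsUnit (1 - f * (u + v)) := by
    rw [isUnit_iff_constantCoeff]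
    simp [hf]
  have hprod : (1 - f * (u + v)) * (u - v) = 0 := by linear_combination hu - hv
  exact sub_eq_zero.mp (hunit.mul_right_eq_zero.mp hprod)

end PowerSeries

theorem psComp_eq_subst {f : PowerSeries ℚ} (hf : constantCoeff f = 0) (g : PowerSeries ℚ) :
    psComp g f = g.subst f := by
  ext n
  rw [psComp, coeff_mk, coeff_subst' (HasSubst.of_constantCoeff_zero' hf),
    finsum_eq_sum_of_support_subset _ (s := range (n + 1))]
  · simp only [smul_eq_mul]
  · intro k hk
    by_contra hkn
    rw [coe_range, Set.mem_Iio, not_lt] at hkn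
    have hzero : coeff n (f ^ k) = 0 :=
      X_pow_dvd_iff.mp (pow_dvd_pow_of_dvd (X_dvd_iff.mpr hf) k) n (by omega)
    exact hk (by simp only [hzero, smul_zero])

theorem catalan_comp (c : PowerSeries ℚ) (hc : c = 1 + X * c ^ 2) :
    psComp c (X * ((1 + X) ^ 2 : PowerSeries ℚ)⁻¹) = 1 + X := by
  set f : PowerSeries ℚ := X * ((1 + X) ^ 2)⁻¹
  have hf : constantCoeff f = 0 := by simp [f]
  have hsubst : HasSubst f := .of_constantCoeff_zero' hf
  rw [psComp_eq_subst hf]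
  refine eq_of_eq_one_add_mul_sq hf ?_ ?_
  · conv_lhs => rw [hc]
    rw [← coe_substAlgHom hsubst, map_add, map_one, map_mul, map_pow, coe_substAlgHom,
      subst_X hsubst]
  · have hinv : ((1 + X : ℚ⟦X⟧) ^ 2)⁻¹ * (1 + X) ^ 2 = 1 :=
      PowerSeries.inv_mul_cancel _ (by simp)
    rw [mul_assoc, hinv, mul_one]
end

section
/- The compositional inverse of x·c(x)^2 is x/(1+x)^2, i.e., substituting x/(1+x)^2 into x·c(x)^2 yields x as formal power series. -/
open PowerSeries Finset

lemma coeff_pow_eq_zero {f : PowerSeries ℚ} (hf : (X : PowerSeries ℚ) ∣ f)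
    {n k : ℕ} (h : n < k) : PowerSeries.coeff n (f ^ k) = 0 := by
  have : (X : PowerSeries ℚ) ^ k ∣ f ^ k := pow_dvd_pow_of_dvd hf k
  exact PowerSeries.X_pow_dvd_iff.mp this n h

lemma aeval_coeff_zero {f : PowerSeries ℚ} (hf : (X : PowerSeries ℚ) ∣ f)
    {n : ℕ} {p : Polynomial ℚ} (hp : ∀ k ≤ n, p.coeff k = 0) :
    PowerSeries.coeff n (Polynomial.aeval f p) = 0 := by
  have hdvd : (Polynomial.X : Polynomial ℚ) ^ (n + 1) ∣ p :=
    Polynomial.X_pow_dvd_iff.mpr (fun d hd => hp d (Nat.lt_succ_iff.mp hd))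
  obtain ⟨q, rfl⟩ := hdvd
  rw [map_mul, map_pow, Polynomial.aeval_X]
  have : (X : PowerSeries ℚ) ^ (n + 1) ∣ f ^ (n + 1) * Polynomial.aeval f q :=
    dvd_mul_of_dvd_left (pow_dvd_pow_of_dvd hf (n + 1)) _
  exact PowerSeries.X_pow_dvd_iff.mp this n (Nat.lt_succ_self n)

lemma aeval_coeff_congr {f : PowerSeries ℚ} (hf : (X : PowerSeries ℚ) ∣ f)
    {n : ℕ} {p q : Polynomial ℚ} (hpq : ∀ k ≤ n, p.coeff k = q.coeff k) :
    PowerSeries.coeff n (Polynomial.aeval f p) = PowerSeries.coeff n (Polynomial.aeval f q) := by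
  have := aeval_coeff_zero hf (p := p - q) (n := n)
    (fun k hk => by simp [Polynomial.coeff_sub, hpq k hk])
  rw [map_sub, map_sub] at this
  linarith

lemma coeff_psComp (g f : PowerSeries ℚ) (hf : (X : PowerSeries ℚ) ∣ f)
    {n m : ℕ} (h : n < m) :
    PowerSeries.coeff n (psComp g f) =
      PowerSeries.coeff n (Polynomial.aeval f (trunc m g)) := by
  have hd : (trunc m g).natDegree < m := by
    by_cases hz : trunc m g = 0
    · simp [hz]; omega
    · exact (Polynomial.natDegree_lt_iff_degree_lt hz).mpr (degree_trunc_lt g m)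
  rw [Polynomial.aeval_eq_sum_range' hd, map_sum]
  simp only [LinearMap.map_smul, smul_eq_mul, coeff_trunc, psComp, coeff_mk]
  have e1 : (∑ i ∈ Finset.range m, (if i < m then PowerSeries.coeff i g else 0) *
      PowerSeries.coeff n (f ^ i)) =
      ∑ i ∈ Finset.range m, PowerSeries.coeff i g * PowerSeries.coeff n (f ^ i) :=
    Finset.sum_congr rfl (fun i hi => by rw [if_pos (Finset.mem_range.mp hi)])
  rw [e1]
  exact Finset.sum_subset (Finset.range_subset_range.mpr h)
    (fun k _ hk => by rw [coeff_pow_eq_zero hf (by simpa using hk), mul_zero])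

lemma psComp_add (g h f : PowerSeries ℚ) : psComp (g + h) f = psComp g f + psComp h f := by
  ext n
  simp [psComp, add_mul, Finset.sum_add_distrib]

lemma psComp_one (f : PowerSeries ℚ) : psComp 1 f = 1 := by
  ext n
  simp only [psComp, coeff_mk, PowerSeries.coeff_one]
  rw [Finset.sum_eq_single 0]
  · simp [PowerSeries.coeff_one]
  · intro k _ hk; simp [hk]
  · intro hk; simp at hk

lemma psComp_X (f : PowerSeries ℚ) (hf : (X : PowerSeries ℚ) ∣ f) : psComp X f = f := by
  ext n
  simp only [psComp, coeff_mk]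
  rw [Finset.sum_eq_single 1]
  · simp
  · intro k _ hk; simp [PowerSeries.coeff_X, hk]
  · intro hk
    simp only [Finset.mem_range, not_lt] at hk
    have hn : n = 0 := by omega
    subst hn
    obtain ⟨u, rfl⟩ := hf
    simp [PowerSeries.coeff_zero_eq_constantCoeff]

lemma psComp_mul (g h f : PowerSeries ℚ) (hf : (X : PowerSeries ℚ) ∣ f) :
    psComp (g * h) f = psComp g f * psComp h f := by
  ext n
  rw [PowerSeries.coeff_mul]
  have hR : ∀ p ∈ Finset.HasAntidiagonal.antidiagonal n,
      PowerSeries.coeff p.1 (psComp g f) * PowerSeries.coeff p.2 (psComp h f) =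
      PowerSeries.coeff p.1 (Polynomial.aeval f (trunc (n+1) g)) *
        PowerSeries.coeff p.2 (Polynomial.aeval f (trunc (n+1) h)) := by
    intro p hp
    have := Finset.HasAntidiagonal.antidiagonal.fst_le hp
    have := Finset.HasAntidiagonal.antidiagonal.snd_le hp
    rw [coeff_psComp g f hf (m := n+1) (by omega), coeff_psComp h f hf (m := n+1) (by omega)]
  rw [Finset.sum_congr rfl hR, ← PowerSeries.coeff_mul, ← map_mul,
    coeff_psComp _ f hf (Nat.lt_succ_self n)]
  apply aeval_coeff_congr hf
  intro k hk
  rw [Polynomial.coeff_mul, coeff_trunc, if_pos (by omega), PowerSeries.coeff_mul]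
  apply Finset.sum_congr rfl
  intro p hp
  have := Finset.HasAntidiagonal.antidiagonal.fst_le hp
  have := Finset.HasAntidiagonal.antidiagonal.snd_le hp
  rw [coeff_trunc, coeff_trunc, if_pos (by omega), if_pos (by omega)]


theorem rev_xc_sq (c : PowerSeries ℚ) (hc : c = 1 + X * c ^ 2) :
    psComp (X * c ^ 2) (X * ((1 + X) ^ 2 : PowerSeries ℚ)⁻¹) = X := by
  set f : PowerSeries ℚ := X * ((1 + X) ^ 2 : PowerSeries ℚ)⁻¹ with hfdef
  have hf : (X : PowerSeries ℚ) ∣ f := ⟨_, rfl⟩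
  set g : PowerSeries ℚ := X * c ^ 2 with hgdef
  have hg : g = X * (1 + g) ^ 2 := by rw [hgdef, ← hc]
  set h := psComp g f with hh
  have key : h = f * (1 + h) ^ 2 := by
    conv_lhs => rw [hh, hg]
    rw [sq (1 + g), psComp_mul _ _ _ hf, psComp_mul _ _ _ hf, psComp_X _ hf, psComp_add,
      psComp_one, ← hh, ← sq]
  have hunit : ((1 + X : PowerSeries ℚ)) ^ 2 * ((1 + X) ^ 2 : PowerSeries ℚ)⁻¹ = 1 :=
    PowerSeries.mul_inv_cancel _ (by simp)
  have eq1 : (1 + X) ^ 2 * h = X * (1 + h) ^ 2 := by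
    calc (1 + X) ^ 2 * h = (1 + X) ^ 2 * (X * ((1 + X) ^ 2 : PowerSeries ℚ)⁻¹ * (1 + h) ^ 2) := by
          conv_lhs => rw [key, hfdef]
      _ = ((1 + X) ^ 2 * ((1 + X) ^ 2 : PowerSeries ℚ)⁻¹) * (X * (1 + h) ^ 2) := by ring
      _ = X * (1 + h) ^ 2 := by rw [hunit, one_mul]
  have eq2 : (h - X) * (1 - X * h) = 0 := by linear_combination eq1
  have h3 : (1 : PowerSeries ℚ) - X * h ≠ 0 := by
    intro hcon
    have := congrArg (PowerSeries.constantCoeff) hcon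
    simp at this
  rcases mul_eq_zero.mp eq2 with h4 | h4
  · exact sub_eq_zero.mp h4
  · exact absurd h4 h3
end

section
/- For every n ≥ 0, Σ_{k=0}^{n} Σ_{j=0}^{n} C_{n-j} · C(2j, j-k) = 4^n, where C_m denotes the m-th Catalan number and C(a,b) the binomial coefficient (zero if b < 0). -/
/-!
Summing over `k` first, the inner sum is the left half of row `2j` of Pascal's triangle,
`(4^j + C(2j, j)) / 2`. So the claim is the convolution identity
`∑_{i+j=n} (4^i + C(2i, i)) C_j = 2 · 4^n`, i.e. `(1/(1-4x) + 1/√(1-4x)) · C(x) = 2/(1-4x)`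
for the generating functions, which follows by induction on `n` from
`4 C(2i, i) = C(2i+2, i+1) + 2 C_i` and the Catalan recurrence.
-/

open Finset

namespace Finset

theorem sum_range_ite_le_reflect {M : Type*} [AddCommMonoid M] (f : ℕ → M) {j n : ℕ}
    (hjn : j ≤ n) :
    ∑ k ∈ range (n + 1), (if k ≤ j then f (j - k) else 0) = ∑ i ∈ range (j + 1), f i := by
  have : (range (n + 1)).filter (· ≤ j) = range (j + 1) := by
    ext k; simp only [mem_filter, mem_range]; omega
  rw [← sum_filter, this, ← sum_range_reflect]
  refine sum_congr rfl fun i hi => ?_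
  rw [add_tsub_cancel_right, Nat.sub_sub_self (mem_range_succ_iff.mp hi)]

end Finset

namespace Nat

theorem four_mul_centralBinom (n : ℕ) :
    4 * centralBinom n = centralBinom (n + 1) + 2 * catalan n := by
  apply Nat.eq_of_mul_eq_mul_left n.succ_pos
  have := succ_mul_centralBinom_succ n
  have := succ_mul_catalan_eq_centralBinom n
  nlinarith

theorem sum_range_choose_succ_add_choose (n m : ℕ) :
    ∑ i ∈ range (m + 1), (n + 1).choose i + n.choose m = 2 * ∑ i ∈ range (m + 1), n.choose i := by
  have upper := sum_range_succ (fun i => n.choose i) m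
  have lower := sum_range_succ' (fun i => n.choose i) m
  rw [sum_range_succ']
  simp only [choose_succ_succ', sum_add_distrib, choose_zero_right] at *
  omega

theorem two_mul_sum_range_choose_two_mul (n : ℕ) :
    2 * ∑ i ∈ range (n + 1), (2 * n).choose i = 4 ^ n + centralBinom n := by
  rw [← sum_range_choose_succ_add_choose, sum_range_choose_halfway, centralBinom]

theorem sum_antidiagonal_four_pow_add_centralBinom_mul_catalan (n : ℕ) :
    ∑ p ∈ antidiagonal n, (4 ^ p.1 + centralBinom p.1) * catalan p.2 = 2 * 4 ^ n := by
  induction n with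
  | zero => simp
  | succ n ih =>
    have step : ∑ p ∈ antidiagonal n, (4 ^ (p.1 + 1) + centralBinom (p.1 + 1)) * catalan p.2
        + 2 * catalan (n + 1) = 4 * (2 * 4 ^ n) := by
      rw [catalan_succ', ← ih, mul_sum, mul_sum, ← sum_add_distrib]
      refine sum_congr rfl fun p _ => ?_
      have := four_mul_centralBinom p.1
      rw [pow_succ]
      nlinarith
    rw [Finset.Nat.sum_antidiagonal_succ]
    simp only [pow_zero, centralBinom_zero]
    rw [pow_succ]
    omega

end Nat

theorem catalan_binomial_four_pow (n : ℕ) :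
    ∑ k ∈ Finset.range (n + 1), ∑ j ∈ Finset.range (n + 1),
        catalan (n - j) * (if k ≤ j then (2 * j).choose (j - k) else 0) = 4 ^ n := by
  have inner : ∀ j ∈ range (n + 1), ∑ k ∈ range (n + 1),
      catalan (n - j) * (if k ≤ j then (2 * j).choose (j - k) else 0)
        = catalan (n - j) * ∑ i ∈ range (j + 1), (2 * j).choose i := fun j hj => by
    rw [← mul_sum, sum_range_ite_le_reflect _ (mem_range_succ_iff.mp hj)]
  rw [sum_comm, sum_congr rfl inner]
  apply Nat.eq_of_mul_eq_mul_left two_pos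
  rw [← Nat.sum_antidiagonal_four_pow_add_centralBinom_mul_catalan,
    Nat.sum_antidiagonal_eq_sum_range_succ (fun i j => (4 ^ i + i.centralBinom) * catalan j),
    mul_sum]
  refine sum_congr rfl fun j _ => ?_
  rw [← Nat.two_mul_sum_range_choose_two_mul]
  ring
end
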